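/- arXiv:1505.04904 — 4 statements merged into one kernel-verified Lean document; each statement's English description precedes it below -/
import Mathlib

section
/- Let A be a self-adjoint operator on a finite-dimensional complex inner product space, E ∈ ℝ, and 0 < ε < η. Assume that the spectral subspace of A for the interval (E - η, E + η) has dimension at most one. If there exists a unit vector φ with ‖(A - E)φ‖ < ε, then there exist an eigenvalue E₀ of A with |E₀ - E| < ε and a corresponding unit eigenvector ψ₀ such that ‖φ - ψ₀‖ ≤ C ε η⁻¹ for some absolute constant C (one can take C = 2). -/
/-!
Expand `φ` in an orthonormal eigenbasis `bᵢ` of `A`, with eigenvalues `μᵢ`. Then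
`‖(A - E)φ‖²` is the average of `(μᵢ - E)²` with weights `|⟪bᵢ, φ⟫|²`, so some `μᵢ₀` lies within
`ε` of `E`; by the dimension bound it is the only eigenvalue within `η` of `E`, so the weight of
`φ` off `bᵢ₀` is at most `ε² / η²`. Hence the component `w` of `φ` along `bᵢ₀` satisfies
`‖φ - w‖ < ε / η`, and normalising `w` moves it by at most `|‖w‖ - ‖φ‖| ≤ ‖φ - w‖`.
-/

open Module Module.End Finset

section

variable {𝕜 V : Type*} [RCLike 𝕜] [NormedAddCommGroup V]

lemma norm_sub_inv_norm_smul_le_two_mul [NormedSpace 𝕜 V] {x : V} (hx : ‖x‖ = 1) (y : V) :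
    ‖x - (‖y‖⁻¹ : 𝕜) • y‖ ≤ 2 * ‖x - y‖ := by
  have hy : ‖y - (‖y‖⁻¹ : 𝕜) • y‖ ≤ ‖x - y‖ := by
    rcases eq_or_ne y 0 with rfl | hy
    · simp
    have hy' : 0 < ‖y‖ := norm_pos_iff.mpr hy
    calc ‖y - (‖y‖⁻¹ : 𝕜) • y‖ = ‖(((‖y‖ - 1) / ‖y‖ : ℝ) : 𝕜) • y‖ := by
          congr 1
          rw [sub_div, div_self hy'.ne', one_div, RCLike.ofReal_sub, RCLike.ofReal_one,
            sub_smul, one_smul, RCLike.ofReal_inv]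
      _ = |‖x‖ - ‖y‖| := by
          rw [norm_smul, RCLike.norm_ofReal, abs_div, abs_of_pos hy', div_mul_cancel₀ _ hy'.ne',
            hx, abs_sub_comm]
      _ ≤ ‖x - y‖ := abs_norm_sub_norm_le x y
  calc ‖x - (‖y‖⁻¹ : 𝕜) • y‖ ≤ ‖x - y‖ + ‖y - (‖y‖⁻¹ : 𝕜) • y‖ :=
        norm_sub_le_norm_sub_add_norm_sub _ _ _
    _ ≤ 2 * ‖x - y‖ := by linarith

variable [InnerProductSpace 𝕜 V]

namespace OrthonormalBasis

variable {ι : Type*} [Fintype ι] (b : OrthonormalBasis ι 𝕜 V)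

lemma sum_sq_norm_repr (v : V) : ∑ i, ‖b.repr v i‖ ^ 2 = ‖v‖ ^ 2 := by
  simpa only [b.repr_apply_apply] using b.sum_sq_norm_inner_right v

lemma norm_sub_repr_smul_sq [DecidableEq ι] (v : V) (i : ι) :
    ‖v - b.repr v i • b i‖ ^ 2 = ∑ j ∈ univ.erase i, ‖b.repr v j‖ ^ 2 := by
  have hrepr (j : ι) : b.repr (v - b.repr v i • b i) j = if j = i then 0 else b.repr v j := by
    by_cases h : j = i <;> simp [b.repr_self, h]
  calc ‖v - b.repr v i • b i‖ ^ 2 = ∑ j, ‖b.repr (v - b.repr v i • b i) j‖ ^ 2 :=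
        (b.sum_sq_norm_repr _).symm
    _ = ∑ j ∈ univ.erase i, ‖b.repr (v - b.repr v i • b i) j‖ ^ 2 :=
        (sum_erase _ (by simp)).symm
    _ = ∑ j ∈ univ.erase i, ‖b.repr v j‖ ^ 2 :=
        sum_congr rfl fun j hj => by rw [hrepr, if_neg (ne_of_mem_erase hj)]

end OrthonormalBasis

namespace LinearMap.IsSymmetric

variable [FiniteDimensional 𝕜 V] {A : V →ₗ[𝕜] V} (hA : A.IsSymmetric) {n : ℕ}
  (hn : finrank 𝕜 V = n)

lemma norm_apply_sub_smul_sq (E : ℝ) (v : V) :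
    ‖A v - (E : 𝕜) • v‖ ^ 2 =
      ∑ i, (hA.eigenvalues hn i - E) ^ 2 * ‖(hA.eigenvectorBasis hn).repr v i‖ ^ 2 := by
  rw [← (hA.eigenvectorBasis hn).sum_sq_norm_repr]
  refine sum_congr rfl fun i _ => ?_
  rw [map_sub, map_smul, PiLp.sub_apply, PiLp.smul_apply, hA.eigenvectorBasis_apply_self_apply,
    smul_eq_mul, ← sub_mul, norm_mul, mul_pow, ← RCLike.ofReal_sub, RCLike.norm_ofReal, sq_abs]

lemma sq_mul_sum_le_norm_apply_sub_smul_sq {s : Finset (Fin n)} {E η : ℝ} (hη : 0 ≤ η)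
    (hs : ∀ i ∈ s, η ≤ |hA.eigenvalues hn i - E|) (v : V) :
    η ^ 2 * ∑ i ∈ s, ‖(hA.eigenvectorBasis hn).repr v i‖ ^ 2 ≤ ‖A v - (E : 𝕜) • v‖ ^ 2 := by
  rw [hA.norm_apply_sub_smul_sq hn, mul_sum]
  calc ∑ i ∈ s, η ^ 2 * ‖(hA.eigenvectorBasis hn).repr v i‖ ^ 2
      ≤ ∑ i ∈ s, (hA.eigenvalues hn i - E) ^ 2 * ‖(hA.eigenvectorBasis hn).repr v i‖ ^ 2 := by
        gcongr ∑ i ∈ s, ?_ * _ with i hi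
        exact (pow_le_pow_left₀ hη (hs i hi) 2).trans_eq (sq_abs _)
    _ ≤ _ := sum_le_sum_of_subset_of_nonneg (subset_univ s) fun _ _ _ => by positivity

lemma exists_abs_eigenvalues_sub_lt {v : V} (hv : ‖v‖ = 1) {E ε : ℝ}
    (h : ‖A v - (E : 𝕜) • v‖ < ε) : ∃ i, |hA.eigenvalues hn i - E| < ε := by
  by_contra! hfar
  have hε : 0 ≤ ε := (norm_nonneg _).trans h.le
  have := hA.sq_mul_sum_le_norm_apply_sub_smul_sq hn (s := univ) hε (fun i _ => hfar i) v
  rw [(hA.eigenvectorBasis hn).sum_sq_norm_repr, hv] at this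
  nlinarith [norm_nonneg (A v - (E : 𝕜) • v)]

lemma mul_norm_sub_repr_smul_le_norm_apply_sub_smul {E η : ℝ} (hη : 0 ≤ η) {i₀ : Fin n}
    (hfar : ∀ i ≠ i₀, η ≤ |hA.eigenvalues hn i - E|) (v : V) :
    η * ‖v - (hA.eigenvectorBasis hn).repr v i₀ • hA.eigenvectorBasis hn i₀‖ ≤
      ‖A v - (E : 𝕜) • v‖ := by
  refine (pow_le_pow_iff_left₀ (by positivity) (norm_nonneg _) two_ne_zero).mp ?_
  rw [mul_pow, OrthonormalBasis.norm_sub_repr_smul_sq]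
  exact hA.sq_mul_sum_le_norm_apply_sub_smul_sq hn hη (fun i hi => hfar i (ne_of_mem_erase hi)) v

lemma card_filter_eigenvalues_mem_le_finrank (s : Set ℝ) [DecidablePred (· ∈ s)] :
    #{i | hA.eigenvalues hn i ∈ s} ≤ finrank 𝕜 ↥(⨆ μ ∈ s, eigenspace A (μ : 𝕜)) := by
  set b := hA.eigenvectorBasis hn
  set t : Finset (Fin n) := {i | hA.eigenvalues hn i ∈ s}
  have hmem (i : t) : b i ∈ ⨆ μ ∈ s, eigenspace A (μ : 𝕜) :=
    le_biSup (fun μ : ℝ => eigenspace A (μ : 𝕜)) (mem_filter.mp i.2).2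
      (hA.hasEigenvector_eigenvectorBasis hn i).1
  calc #t = finrank 𝕜 (Submodule.span 𝕜 (Set.range fun i : t => b i)) := by
        rw [finrank_span_eq_card (b := fun i : t => b i)
          (b.orthonormal.linearIndependent.comp _ Subtype.val_injective), Fintype.card_coe]
    _ ≤ _ := Submodule.finrank_mono <| Submodule.span_le.mpr <| Set.range_subset_iff.mpr hmem

lemma eq_of_eigenvalues_mem_of_finrank_le_one {s : Set ℝ}
    (hs : finrank 𝕜 ↥(⨆ μ ∈ s, eigenspace A (μ : 𝕜)) ≤ 1) {i j : Fin n}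
    (hi : hA.eigenvalues hn i ∈ s) (hj : hA.eigenvalues hn j ∈ s) : i = j := by
  classical
  exact card_le_one.mp ((hA.card_filter_eigenvalues_mem_le_finrank hn s).trans hs) i
    (by simpa using hi) j (by simpa using hj)

end LinearMap.IsSymmetric

end

theorem approx_eigenvector_implies_close_eigenvector_general
    {V : Type*} [NormedAddCommGroup V] [InnerProductSpace ℂ V] [FiniteDimensional ℂ V]
    (A : V →ₗ[ℂ] V) (hA : A.IsSymmetric) (E ε η : ℝ) (hεη : ε < η)
    (hdim : Module.finrank ℂ
      ↥(⨆ μ ∈ Set.Ioo (E - η) (E + η), Module.End.eigenspace A (μ : ℂ)) ≤ 1)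
    (φ : V) (hφ : ‖φ‖ = 1) (h : ‖A φ - (E : ℂ) • φ‖ < ε) :
    ∃ (E₀ : ℝ) (ψ₀ : V), Module.End.HasEigenvector A (E₀ : ℂ) ψ₀ ∧ ‖ψ₀‖ = 1 ∧
      |E₀ - E| < ε ∧ ‖φ - ψ₀‖ ≤ 2 * ε * η⁻¹ := by
  set b := hA.eigenvectorBasis rfl
  set μ := hA.eigenvalues rfl
  have hη : 0 < η := (norm_nonneg _).trans_lt (h.trans hεη)
  obtain ⟨i₀, hi₀⟩ := hA.exists_abs_eigenvalues_sub_lt rfl hφ h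
  have hnear {x : ℝ} (hx : |x - E| < η) : x ∈ Set.Ioo (E - η) (E + η) := by
    rwa [← Real.ball_eq_Ioo, Metric.mem_ball, Real.dist_eq]
  have hfar : ∀ i ≠ i₀, η ≤ |μ i - E| := fun i hi => by
    by_contra! hi'
    exact hi <| hA.eq_of_eigenvalues_mem_of_finrank_le_one rfl hdim
      (hnear hi') (hnear (hi₀.trans hεη))
  set w := b.repr φ i₀ • b i₀
  have hw : η * ‖φ - w‖ < ε :=
    (hA.mul_norm_sub_repr_smul_le_norm_apply_sub_smul rfl hη.le hfar φ).trans_lt h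
  have hw0 : w ≠ 0 := by
    rintro hw0
    rw [hw0, sub_zero, hφ, mul_one] at hw
    exact lt_asymm hεη hw
  refine ⟨μ i₀, (‖w‖⁻¹ : ℂ) • w, ⟨?_, ?_⟩, norm_smul_inv_norm hw0, hi₀, ?_⟩
  · exact Submodule.smul_mem _ _ <|
      Submodule.smul_mem _ _ (hA.hasEigenvector_eigenvectorBasis rfl i₀).1
  · exact smul_ne_zero (by simpa using hw0) hw0
  · calc ‖φ - (‖w‖⁻¹ : ℂ) • w‖ ≤ 2 * ‖φ - w‖ := norm_sub_inv_norm_smul_le_two_mul hφ w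
      _ ≤ 2 * ε * η⁻¹ := by
        rw [mul_assoc, ← div_eq_mul_inv]
        gcongr
        rw [le_div_iff₀ hη, mul_comm]
        exact hw.le

/-- If the spectral subspace of a self-adjoint operator `A` for the interval
`(E - η, E + η)` has dimension at most one, and a unit vector `φ` satisfies
`‖(A - E)φ‖ < ε` with `0 < ε < η`, then there is an eigenvalue `E₀` of `A` with
`|E₀ - E| < ε` and a unit eigenvector `ψ₀` with `‖φ - ψ₀‖ ≤ 2 ε η⁻¹`. -/
theorem approx_eigenvector_implies_close_eigenvector
    {V : Type*} [NormedAddCommGroup V] [InnerProductSpace ℂ V] [FiniteDimensional ℂ V]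
    (A : V →ₗ[ℂ] V) (hA : A.IsSymmetric) (E ε η : ℝ) (hε : 0 < ε) (hεη : ε < η)
    (hdim : Module.finrank ℂ
      ↥(⨆ μ ∈ Set.Ioo (E - η) (E + η), Module.End.eigenspace A (μ : ℂ)) ≤ 1)
    (φ : V) (hφ : ‖φ‖ = 1) (h : ‖A φ - (E : ℂ) • φ‖ < ε) :
    ∃ (E₀ : ℝ) (ψ₀ : V), Module.End.HasEigenvector A (E₀ : ℂ) ψ₀ ∧ ‖ψ₀‖ = 1 ∧
      |E₀ - E| < ε ∧ ‖φ - ψ₀‖ ≤ 2 * ε * η⁻¹ :=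
  approx_eigenvector_implies_close_eigenvector_general A hA E ε η hεη hdim φ hφ h
end

section
/- Let H be a bounded self-adjoint operator on ℓ²(ℤ) given by a discrete Schrödinger operator (Hφ)(n) = -φ(n-1) - φ(n+1) + V(n)φ(n) with bounded real potential V, and let E ∈ ℝ, δ > 0. Suppose there exist sequences aₖ → -∞ and bₖ → ∞ such that for every k, dist(E, spec H_{[aₖ,bₖ]}) ≥ δ, where H_{[a,b]} denotes the restriction of H to [a,b] with Dirichlet boundary conditions. Then dist(E, spec H) ≥ δ. -/
/-!
On a vector `φ` supported in `[aₖ, bₖ]` the operator `H` agrees, inside the interval, with the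
Dirichlet matrix `H_{[aₖ,bₖ]}` applied to the restriction of `φ` (the Dirichlet condition is exactly
the vanishing of `φ` at `aₖ - 1` and `bₖ + 1`). Expanding in an orthonormal eigenbasis of that real
symmetric matrix gives `‖(H - E)φ‖ ≥ δ‖φ‖`. Since the intervals exhaust `ℤ`, this holds for every
finitely supported `φ`, hence by density on all of `ℓ²(ℤ)`. A point `z` of the spectrum is real,
and `|z - E| < δ` would make the self-adjoint operator `H - z` bounded below, hence injective with
closed range whose orthogonal complement `ker (H - z)` is trivial, i.e. invertible.
-/

open Filter

/-- The Dirichlet restriction of the discrete Schrödinger operator with potential `W`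
to the interval `[a, b] ∩ ℤ`: tridiagonal matrix with diagonal `W` and off-diagonal `-1`. -/
noncomputable def schrInt (W : ℤ → ℝ) (a b : ℤ) :
    Matrix (Finset.Icc a b) (Finset.Icc a b) ℝ :=
  fun i j => (if (i : ℤ) = (j : ℤ) then W i else 0) +
    (if (i : ℤ) = (j : ℤ) + 1 ∨ (j : ℤ) = (i : ℤ) + 1 then -1 else 0)

open Module.End
open scoped Matrix

theorem LinearMap.IsSymmetric.mul_norm_le_norm_sub_smul {𝕜 F : Type*} [RCLike 𝕜]
    [NormedAddCommGroup F] [InnerProductSpace 𝕜 F] [FiniteDimensional 𝕜 F]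
    {T : F →ₗ[𝕜] F} (hT : T.IsSymmetric) {E δ : ℝ}
    (h : ∀ μ : 𝕜, HasEigenvalue T μ → δ ≤ ‖μ - E‖) (x : F) :
    δ * ‖x‖ ≤ ‖T x - (E : 𝕜) • x‖ := by
  rcases le_or_gt δ 0 with hδ | hδ
  · exact (mul_nonpos_of_nonpos_of_nonneg hδ (norm_nonneg x)).trans (norm_nonneg _)
  set b := hT.eigenvectorBasis rfl
  set μ := hT.eigenvalues rfl
  have norm_sq (y : F) : ‖y‖ ^ 2 = ∑ i, ‖b.repr y i‖ ^ 2 := by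
    rw [← b.repr.norm_map, EuclideanSpace.norm_sq_eq]
  have repr_sub (i) : b.repr (T x - (E : 𝕜) • x) i = (μ i - E) * b.repr x i := by
    simp [hT.eigenvectorBasis_apply_self_apply, b, μ, sub_mul, RCLike.real_smul_eq_coe_mul]
  have eigen_far (i) : δ ≤ ‖(μ i : 𝕜) - E‖ := h _ (hT.hasEigenvalue_eigenvalues rfl i)
  refine abs_le_of_sq_le_sq' ?_ (norm_nonneg _) |>.2
  calc (δ * ‖x‖) ^ 2 = ∑ i, δ ^ 2 * ‖b.repr x i‖ ^ 2 := by rw [mul_pow, norm_sq, Finset.mul_sum]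
    _ ≤ ∑ i, ‖(μ i : 𝕜) - E‖ ^ 2 * ‖b.repr x i‖ ^ 2 := by
      gcongr with i
      exact eigen_far i
    _ = ‖T x - (E : 𝕜) • x‖ ^ 2 := by simp_rw [norm_sq, repr_sub, norm_mul, mul_pow]

theorem Matrix.map_ofReal_mulVec_re {n : Type*} [Fintype n] (A : Matrix n n ℝ) (v : n → ℂ)
    (i : n) : ((A.map Complex.ofReal *ᵥ v) i).re = (A *ᵥ fun j => (v j).re) i := by
  simp [mulVec, dotProduct, Complex.re_sum]

theorem Matrix.map_ofReal_mulVec_im {n : Type*} [Fintype n] (A : Matrix n n ℝ) (v : n → ℂ)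
    (i : n) : ((A.map Complex.ofReal *ᵥ v) i).im = (A *ᵥ fun j => (v j).im) i := by
  simp [mulVec, dotProduct, Complex.im_sum]

theorem Matrix.IsHermitian.exists_eigenvector_of_hasEigenvalue_map_ofReal {n : Type*}
    [Fintype n] [DecidableEq n] {A : Matrix n n ℝ} (hA : A.IsHermitian) {μ : ℂ}
    (hμ : HasEigenvalue (A.map Complex.ofReal).toEuclideanLin μ) :
    (μ.re : ℂ) = μ ∧ ∃ v : n → ℝ, v ≠ 0 ∧ A *ᵥ v = μ.re • v := by
  have hsymm : (A.map Complex.ofReal).toEuclideanLin.IsSymmetric :=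
    isSymmetric_toEuclideanLin_iff.2 (hA.map _ fun _ => by simp)
  have hreal : (μ.re : ℂ) = μ := RCLike.conj_eq_iff_re.1 (hsymm.conj_eigenvalue_eq_self hμ)
  obtain ⟨v, hv, hv0⟩ := hμ.exists_hasEigenvector
  have hmul : A.map Complex.ofReal *ᵥ v = μ • v := by
    simpa using congrArg WithLp.ofLp (mem_eigenspace_iff.1 hv)
  have hμim : μ.im = 0 := by rw [← hreal]; simp
  refine ⟨hreal, ?_⟩
  by_cases hre : (fun j => (v j).re) = 0
  · refine ⟨fun j => (v j).im, fun him => hv0 ?_, ?_⟩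
    · ext j
      exact Complex.ext (congrFun hre j) (congrFun him j)
    · ext i
      rw [← map_ofReal_mulVec_im, hmul]
      simp [hμim]
  · refine ⟨fun j => (v j).re, hre, ?_⟩
    ext i
    rw [← map_ofReal_mulVec_re, hmul]
    simp [hμim]

section

variable {ι 𝕜 : Type*} [RCLike 𝕜] (f : lp (fun _ : ι => 𝕜) 2) (s : Finset ι)

theorem lp.norm_sq_toLp_restrict :
    ‖(WithLp.toLp 2 fun i : s => f i : EuclideanSpace 𝕜 s)‖ ^ 2 = ∑ i ∈ s, ‖f i‖ ^ 2 := by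
  rw [EuclideanSpace.norm_sq_eq, Finset.sum_coe_sort s fun i => ‖f i‖ ^ 2]

theorem lp.norm_toLp_restrict_le :
    ‖(WithLp.toLp 2 fun i : s => f i : EuclideanSpace 𝕜 s)‖ ≤ ‖f‖ := by
  refine (sq_le_sq₀ (norm_nonneg _) (norm_nonneg _)).1 ?_
  have := lp.sum_rpow_le_norm_rpow (p := 2) (by norm_num) f s
  rw [lp.norm_sq_toLp_restrict]
  simpa using this

theorem lp.norm_toLp_restrict_eq (hf : ∀ i ∉ s, f i = 0) :
    ‖(WithLp.toLp 2 fun i : s => f i : EuclideanSpace 𝕜 s)‖ = ‖f‖ := by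
  refine (sq_eq_sq₀ (norm_nonneg _) (norm_nonneg _)).1 ?_
  have := lp.norm_rpow_eq_tsum (p := 2) (by norm_num) f
  norm_num at this
  rw [lp.norm_sq_toLp_restrict, this, tsum_eq_sum fun i hi => by simp [hf i hi]]

end

theorem lp.dense_setOf_finite_support {ι : Type*} {E : ι → Type*}
    [∀ i, NormedAddCommGroup (E i)] {p : ENNReal} [Fact (1 ≤ p)] (hp : p ≠ ⊤) :
    Dense {f : lp E p | ∃ s : Finset ι, ∀ i ∉ s, f i = 0} := by
  classical
  refine fun f => mem_closure_of_tendsto (lp.hasSum_single hp f) (.of_forall fun s => ⟨s, ?_⟩)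
  intro i hi
  simp only [lp.coeFn_sum, Finset.sum_apply, lp.single_apply]
  exact Finset.sum_eq_zero fun j hj => Pi.single_eq_of_ne (by rintro rfl; exact hi hj) _

theorem ContinuousLinearMap.IsStarNormal.isUnit_of_mul_norm_le {𝕜 F : Type*} [RCLike 𝕜]
    [NormedAddCommGroup F] [InnerProductSpace 𝕜 F] [CompleteSpace F] {T : F →L[𝕜] F}
    (hT : IsStarNormal T) {c : ℝ} (hc : 0 < c) (h : ∀ x, c * ‖x‖ ≤ ‖T x‖) : IsUnit T := by
  obtain ⟨K, hK⟩ := antilipschitzWith_iff_exists_mul_le_norm.2 ⟨c, hc, h⟩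
  rw [isUnit_iff_bijective, bijective_iff_dense_range_and_antilipschitz]
  refine ⟨?_, K, hK⟩
  rw [Submodule.topologicalClosure_eq_top_iff, IsStarNormal.orthogonal_range hT,
    LinearMap.ker_eq_bot]
  exact hK.injective

theorem IsSelfAdjoint.le_norm_sub_of_mem_spectrum {F : Type*} [NormedAddCommGroup F]
    [InnerProductSpace ℂ F] [CompleteSpace F] {T : F →L[ℂ] F} (hT : IsSelfAdjoint T) {E δ : ℝ}
    (h : ∀ x, δ * ‖x‖ ≤ ‖T x - (E : ℂ) • x‖) {z : ℂ} (hz : z ∈ spectrum ℂ T) :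
    δ ≤ ‖z - E‖ := by
  set x := z.re
  have hz_real : (x : ℂ) = z := (hT.mem_spectrum_eq_re hz).symm
  rw [← hz_real, ← Complex.ofReal_sub, Complex.norm_real, Real.norm_eq_abs]
  by_contra! hclose
  have hbelow (y : F) : (δ - |x - E|) * ‖y‖ ≤ ‖(T - (x : ℂ) • 1) y‖ := by
    have hsplit : (T - (x : ℂ) • 1) y = (T y - (E : ℂ) • y) - ((x - E : ℝ) : ℂ) • y := by
      simp only [sub_apply, smul_apply, one_apply_eq_self, Complex.ofReal_sub, sub_smul]
      abel
    rw [hsplit, sub_mul]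
    refine le_trans ?_ (norm_sub_norm_le _ _)
    rw [norm_smul, Complex.norm_real, Real.norm_eq_abs]
    exact sub_le_sub_right (h y) _
  have hnormal : IsStarNormal (T - (x : ℂ) • 1) :=
    (hT.sub ((show IsSelfAdjoint (x : ℂ) from Complex.conj_ofReal x).smul (.one _))).isStarNormal
  have hunit :=
    ContinuousLinearMap.IsStarNormal.isUnit_of_mul_norm_le hnormal (sub_pos.2 hclose) hbelow
  refine spectrum.mem_iff.1 hz ?_
  rw [← hz_real, Algebra.algebraMap_eq_smul_one, ← neg_sub]
  exact hunit.neg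

theorem schrInt_map_ofReal_mulVec (W : ℤ → ℝ) {a b : ℤ} {g : ℤ → ℂ}
    (hg : ∀ n ∉ Finset.Icc a b, g n = 0) (i : Finset.Icc a b) :
    ((schrInt W a b).map Complex.ofReal *ᵥ fun j => g j) i
      = -g (i - 1) - g (i + 1) + W i * g i := by
  have hoff (j : ℤ) : (if (i : ℤ) = j + 1 ∨ j = i + 1 then (-1 : ℝ) else 0)
      = (if i - 1 = j then -1 else 0) + (if i + 1 = j then -1 else 0) := by
    split_ifs <;> first | rfl | omega | norm_num
  have hsupp (n : ℤ) : (if n ∈ Finset.Icc a b then -g n else 0) = -g n := by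
    split_ifs with h
    · rfl
    · rw [hg n h, neg_zero]
  simp only [Matrix.mulVec, dotProduct, schrInt, Matrix.map_apply]
  rw [Finset.sum_coe_sort (Finset.Icc a b) fun j => (((if (i : ℤ) = j then W i else 0) +
    (if (i : ℤ) = j + 1 ∨ j = i + 1 then -1 else 0) : ℝ) : ℂ) * g j]
  simp only [hoff, apply_ite Complex.ofReal, Complex.ofReal_add, Complex.ofReal_zero,
    Complex.ofReal_neg, Complex.ofReal_one, add_mul, ite_mul, zero_mul, neg_one_mul,
    Finset.sum_add_distrib, Finset.sum_ite_eq, i.2, if_true, hsupp]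
  ring

theorem schrInt_isHermitian (W : ℤ → ℝ) (a b : ℤ) : (schrInt W a b).IsHermitian := by
  refine Matrix.IsHermitian.ext fun i j => ?_
  simp only [schrInt, star_trivial, eq_comm (a := (i : ℤ)), or_comm]
  split_ifs <;> simp_all

local notation "ℓ²" => lp (fun _ : ℤ => ℂ) 2

section

variable {V : ℤ → ℝ} {H : ℓ² →L[ℂ] ℓ²}
  (hH : ∀ φ : ℓ², ∀ n : ℤ, H φ n = -φ (n - 1) - φ (n + 1) + V n * φ n) {E δ : ℝ}
include hH

theorem mul_norm_le_norm_sub_smul_of_eq_zero_off_Icc {a b : ℤ}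
    (hfin : ∀ μ : ℝ, (∃ v : Finset.Icc a b → ℝ, v ≠ 0 ∧ schrInt V a b *ᵥ v = μ • v) →
      δ ≤ |μ - E|)
    {ψ : ℓ²} (hψ : ∀ n ∉ Finset.Icc a b, ψ n = 0) :
    δ * ‖ψ‖ ≤ ‖H ψ - (E : ℂ) • ψ‖ := by
  set A := (schrInt V a b).map Complex.ofReal
  set restrict : ℓ² → EuclideanSpace ℂ (Finset.Icc a b) := fun f => WithLp.toLp 2 fun i => f i
  have hrestrict : A.toEuclideanLin (restrict ψ) - (E : ℂ) • restrict ψ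
      = restrict (H ψ - (E : ℂ) • ψ) := by
    ext i
    simp only [restrict, A, Matrix.ofLp_toLpLin, Matrix.toLin'_apply, WithLp.ofLp_sub,
      WithLp.ofLp_smul, Pi.sub_apply, Pi.smul_apply, schrInt_map_ofReal_mulVec V hψ, lp.coeFn_sub,
      lp.coeFn_smul, hH, smul_eq_mul]
  have hA : A.toEuclideanLin.IsSymmetric :=
    Matrix.isSymmetric_toEuclideanLin_iff.2 ((schrInt_isHermitian V a b).map _ fun _ => by simp)
  have heig (μ : ℂ) (hμ : HasEigenvalue A.toEuclideanLin μ) : δ ≤ ‖μ - E‖ := by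
    obtain ⟨hreal, hv⟩ :=
      (schrInt_isHermitian V a b).exists_eigenvector_of_hasEigenvalue_map_ofReal hμ
    rw [← hreal, ← Complex.ofReal_sub, Complex.norm_real, Real.norm_eq_abs]
    exact hfin _ hv
  calc δ * ‖ψ‖ = δ * ‖restrict ψ‖ := by rw [lp.norm_toLp_restrict_eq _ _ hψ]
    _ ≤ ‖A.toEuclideanLin (restrict ψ) - (E : ℂ) • restrict ψ‖ :=
      hA.mul_norm_le_norm_sub_smul heig _
    _ = ‖restrict (H ψ - (E : ℂ) • ψ)‖ := by rw [hrestrict]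
    _ ≤ ‖H ψ - (E : ℂ) • ψ‖ := lp.norm_toLp_restrict_le _ _

theorem mul_norm_le_norm_sub_smul_of_exhaustion {a b : ℕ → ℤ}
    (ha : Tendsto a atTop atBot) (hb : Tendsto b atTop atTop)
    (hfin : ∀ k : ℕ, ∀ μ : ℝ, (∃ v : Finset.Icc (a k) (b k) → ℝ, v ≠ 0 ∧
      schrInt V (a k) (b k) *ᵥ v = μ • v) → δ ≤ |μ - E|)
    (φ : ℓ²) : δ * ‖φ‖ ≤ ‖H φ - (E : ℂ) • φ‖ := by
  refine (lp.dense_setOf_finite_support (p := 2) ENNReal.ofNat_ne_top).induction ?_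
    (isClosed_le (by fun_prop) (by fun_prop)) φ
  rintro ψ ⟨s, hψ⟩
  obtain ⟨k, hak, hbk⟩ := (((eventually_all_finset s).2 fun n _ => ha.eventually_le_atBot n).and
    ((eventually_all_finset s).2 fun n _ => hb.eventually_ge_atTop n)).exists
  refine mul_norm_le_norm_sub_smul_of_eq_zero_off_Icc hH (hfin k) fun n hn => hψ n fun hns => ?_
  exact hn (Finset.mem_Icc.2 ⟨hak n hns, hbk n hns⟩)

end

theorem dist_spectrum_of_dist_finite_spectra_general
    (V : ℤ → ℝ)
    (H : lp (fun _ : ℤ => ℂ) 2 →L[ℂ] lp (fun _ : ℤ => ℂ) 2)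
    (hH : ∀ φ : lp (fun _ : ℤ => ℂ) 2, ∀ n : ℤ,
      (H φ : ℤ → ℂ) n = -(φ : ℤ → ℂ) (n - 1) - (φ : ℤ → ℂ) (n + 1) + V n * (φ : ℤ → ℂ) n)
    (hsa : IsSelfAdjoint H)
    (E δ : ℝ)
    (a b : ℕ → ℤ)
    (ha : Tendsto a atTop atBot) (hb : Tendsto b atTop atTop)
    (hfin : ∀ k : ℕ, ∀ μ : ℝ,
      (∃ v : (Finset.Icc (a k) (b k)) → ℝ, v ≠ 0 ∧
        (schrInt V (a k) (b k)).mulVec v = μ • v) → δ ≤ |μ - E|) :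
    ∀ z ∈ spectrum ℂ H, δ ≤ ‖z - (E : ℂ)‖ := fun _ hz =>
  hsa.le_norm_sub_of_mem_spectrum (mul_norm_le_norm_sub_smul_of_exhaustion hH ha hb hfin) hz

/-- if `dist(E, spec H_{[aₖ,bₖ]}) ≥ δ` along exhausting intervals, then
`dist(E, spec H) ≥ δ` for the full-line discrete Schrödinger operator `H` on `ℓ²(ℤ)`. -/
theorem dist_spectrum_of_dist_finite_spectra
    (V : ℤ → ℝ) (M : ℝ) (hV : ∀ n, |V n| ≤ M)
    (H : lp (fun _ : ℤ => ℂ) 2 →L[ℂ] lp (fun _ : ℤ => ℂ) 2)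
    (hH : ∀ φ : lp (fun _ : ℤ => ℂ) 2, ∀ n : ℤ,
      (H φ : ℤ → ℂ) n = -(φ : ℤ → ℂ) (n - 1) - (φ : ℤ → ℂ) (n + 1) + V n * (φ : ℤ → ℂ) n)
    (hsa : IsSelfAdjoint H)
    (E δ : ℝ) (hδ : 0 < δ)
    (a b : ℕ → ℤ)
    (ha : Tendsto a atTop atBot) (hb : Tendsto b atTop atTop)
    (hfin : ∀ k : ℕ, ∀ μ : ℝ,
      (∃ v : (Finset.Icc (a k) (b k)) → ℝ, v ≠ 0 ∧
        (schrInt V (a k) (b k)).mulVec v = μ • v) → δ ≤ |μ - E|) :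
    ∀ z ∈ spectrum ℂ H, δ ≤ ‖z - (E : ℂ)‖ :=
  dist_spectrum_of_dist_finite_spectra_general V H hH hsa E δ a b ha hb hfin
end

section
/- Let ψ : ℤ → ℝ solve the difference equation -ψ(n-1) - ψ(n+1) + V(n)ψ(n) = Eψ(n) for all n, and let [a,b] ⊂ ℤ be a finite interval such that E is not an eigenvalue of the Dirichlet restriction H_{[a,b]}. Then for every m ∈ [a,b], the Poisson formula holds: ψ(m) = G(m, a) ψ(a-1) + G(m, b+1') ψ(b+1), where G(m,a) := (H_{[a,b]} - E)^{-1}(m, a) and G(m, b+1') := (H_{[a,b]} - E)^{-1}(m, b). -/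
/-- Poisson formula: if `ψ` solves the difference equation
`-ψ(n-1) - ψ(n+1) + V(n)ψ(n) = Eψ(n)` on `ℤ` and `E` is not an eigenvalue of the
Dirichlet restriction `H_{[a,b]}`, then for each `m ∈ [a,b]`,
`ψ(m) = G(m,a)·ψ(a-1) + G(m,b)·ψ(b+1)` with `G = (H_{[a,b]} - E)⁻¹`. -/
theorem poisson_formula
    (V : ℤ → ℝ) (E : ℝ) (ψ : ℤ → ℝ)
    (hψ : ∀ n : ℤ, -ψ (n - 1) - ψ (n + 1) + V n * ψ n = E * ψ n)
    (a b : ℤ) (hab : a ≤ b)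
    (hE : ¬ ∃ v : (Finset.Icc a b) → ℝ, v ≠ 0 ∧ (schrInt V a b).mulVec v = E • v)
    (m : ℤ) (hm : m ∈ Finset.Icc a b) :
    ψ m = (schrInt V a b - E • 1)⁻¹ ⟨m, hm⟩ ⟨a, Finset.mem_Icc.mpr ⟨le_refl a, hab⟩⟩ * ψ (a - 1)
        + (schrInt V a b - E • 1)⁻¹ ⟨m, hm⟩ ⟨b, Finset.mem_Icc.mpr ⟨hab, le_refl b⟩⟩ * ψ (b + 1) := by
  set M := schrInt V a b - E • 1 with hMdef
  -- entries of M
  have hM : ∀ (i j : Finset.Icc a b), M i j =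
      (if (i : ℤ) = (j : ℤ) then V i - E else 0) +
      (if (i : ℤ) = (j : ℤ) + 1 ∨ (j : ℤ) = (i : ℤ) + 1 then -1 else 0) := by
    intro i j
    have : (i = j) ↔ ((i : ℤ) = (j : ℤ)) := Subtype.ext_iff
    simp only [hMdef, Matrix.sub_apply, Matrix.smul_apply, Matrix.one_apply, schrInt,
      smul_eq_mul, this]
    split_ifs <;> ring
  -- invertibility
  have hdet : IsUnit M.det := by
    rw [isUnit_iff_ne_zero]
    intro h
    obtain ⟨v, hv, hv0⟩ := (Matrix.exists_mulVec_eq_zero_iff).mpr h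
    apply hE
    refine ⟨v, hv, ?_⟩
    have : M.mulVec v = (schrInt V a b).mulVec v - E • v := by
      simp [hMdef, Matrix.sub_mulVec, Matrix.smul_mulVec, Matrix.one_mulVec]
    rw [this, sub_eq_zero] at hv0
    exact hv0
  -- the key computation
  set u : (Finset.Icc a b) → ℝ := fun j => ψ j with hu
  have key : M.mulVec u = fun i : (Finset.Icc a b) =>
      (if (i : ℤ) = a then ψ (a - 1) else 0) + (if (i : ℤ) = b then ψ (b + 1) else 0) := by
    funext i
    obtain ⟨i, hi⟩ := i
    rw [Finset.mem_Icc] at hi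
    simp only [Matrix.mulVec, dotProduct]
    have huniv : (Finset.univ : Finset (Finset.Icc a b)) = (Finset.Icc a b).attach := rfl
    rw [huniv]
    have hterm : ∀ j : (Finset.Icc a b), M ⟨i, Finset.mem_Icc.mpr hi⟩ j * u j =
        (if i = (j : ℤ) then (V i - E) * ψ j else 0) +
        ((if (j : ℤ) = i - 1 then -ψ j else 0) + (if (j : ℤ) = i + 1 then -ψ j else 0)) := by
      intro j
      rw [hM]
      show ((if i = (j : ℤ) then V i - E else 0) +
        if i = (j : ℤ) + 1 ∨ (j : ℤ) = i + 1 then -1 else 0) * ψ j = _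
      split_ifs <;> first | omega | ring
    rw [Finset.sum_congr rfl (fun j _ => hterm j)]
    rw [Finset.sum_add_distrib, Finset.sum_add_distrib]
    rw [Finset.sum_attach (Finset.Icc a b) (fun j => if i = j then (V i - E) * ψ j else 0),
        Finset.sum_attach (Finset.Icc a b) (fun j => if j = i - 1 then -ψ j else 0),
        Finset.sum_attach (Finset.Icc a b) (fun j => if j = i + 1 then -ψ j else 0)]
    rw [Finset.sum_ite_eq, Finset.sum_ite_eq', Finset.sum_ite_eq']
    have hmem : i ∈ Finset.Icc a b := Finset.mem_Icc.mpr hi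
    have heq := hψ i
    simp only [hmem, if_true, Finset.mem_Icc]
    by_cases h1 : i = a <;> by_cases h2 : i = b <;> subst_vars <;>
      split_ifs <;> first | omega | linear_combination heq
  -- conclude
  have hinv : u = M⁻¹.mulVec (M.mulVec u) := by
    rw [Matrix.mulVec_mulVec, Matrix.nonsing_inv_mul M hdet, Matrix.one_mulVec]
  have := congrFun hinv ⟨m, hm⟩
  rw [key] at this
  rw [show ψ m = u ⟨m, hm⟩ from rfl, this]
  simp only [Matrix.mulVec, dotProduct]
  have hsplit : ∀ j : (Finset.Icc a b),
      M⁻¹ ⟨m, hm⟩ j * ((if (j : ℤ) = a then ψ (a - 1) else 0) + if (j : ℤ) = b then ψ (b + 1) else 0) =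
      (if j = (⟨a, Finset.mem_Icc.mpr ⟨le_refl a, hab⟩⟩ : Finset.Icc a b) then M⁻¹ ⟨m, hm⟩ j * ψ (a - 1) else 0) +
      (if j = (⟨b, Finset.mem_Icc.mpr ⟨hab, le_refl b⟩⟩ : Finset.Icc a b) then M⁻¹ ⟨m, hm⟩ j * ψ (b + 1) else 0) := by
    intro j
    have h1 : ((j : ℤ) = a) ↔ (j = ⟨a, Finset.mem_Icc.mpr ⟨le_refl a, hab⟩⟩) := by
      rw [Subtype.ext_iff]
    have h2 : ((j : ℤ) = b) ↔ (j = ⟨b, Finset.mem_Icc.mpr ⟨hab, le_refl b⟩⟩) := by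
      rw [Subtype.ext_iff]
    simp only [h1, h2]
    split_ifs <;> ring
  rw [Finset.sum_congr rfl (fun j _ => hsplit j), Finset.sum_add_distrib,
    Finset.sum_ite_eq', Finset.sum_ite_eq']
  simp
end

section
/- Let x, ω ∈ ℝ, E ∈ ℝ, and [a,b] ⊂ ℤ a finite interval. Suppose that for every m ∈ [a,b] there exists a subinterval Λ_m = [a_m, b_m] ⊆ [a,b] containing m, such that E is not an eigenvalue of H_{Λ_m} and (1 - [a_m = a])·|(H_{Λ_m} - E)^{-1}(a_m, m)| + (1 - [b_m = b])·|(H_{Λ_m} - E)^{-1}(b_m, m)| < 1, where [P] is 1 if P holds and 0 otherwise. Then E is not an eigenvalue of H_{[a,b]}. -/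
noncomputable def extZ {c d : ℤ} (u : Finset.Icc c d → ℝ) : ℤ → ℝ :=
  fun n => if h : n ∈ Finset.Icc c d then u ⟨n, h⟩ else 0

lemma sum_ite_coe {c d : ℤ} (t : ℤ) (f : Finset.Icc c d → ℝ) :
    (∑ k : Finset.Icc c d, if (k : ℤ) = t then f k else 0) =
    if h : t ∈ Finset.Icc c d then f ⟨t, h⟩ else 0 := by
  split_ifs with h
  · rw [Fintype.sum_eq_single (⟨t, h⟩ : Finset.Icc c d)]
    · simp
    · intro k hk
      rw [if_neg]
      intro hkt
      exact hk (Subtype.ext hkt)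
  · apply Finset.sum_eq_zero
    intro k _
    rw [if_neg]
    intro hkt
    exact h (hkt ▸ k.2)

lemma schrInt_mulVec {c d : ℤ} (W : ℤ → ℝ) (u : Finset.Icc c d → ℝ)
    (n : Finset.Icc c d) :
    (schrInt W c d).mulVec u n = W n * u n - extZ u ((n : ℤ) - 1) - extZ u ((n : ℤ) + 1) := by
  have hpt : ∀ k : Finset.Icc c d,
      schrInt W c d n k * u k =
      (if (k : ℤ) = (n : ℤ) then W n * u k else 0) +
      ((if (k : ℤ) = (n : ℤ) - 1 then -u k else 0) +
       (if (k : ℤ) = (n : ℤ) + 1 then -u k else 0)) := by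
    intro k
    unfold schrInt
    split_ifs with h1 h2 h3 h4 h5 h6 h7 <;> try ring1
    all_goals (exfalso; omega)
  unfold Matrix.mulVec dotProduct
  calc (∑ k, schrInt W c d n k * u k)
      = ∑ k : Finset.Icc c d,
          ((if (k : ℤ) = (n : ℤ) then W n * u k else 0) +
          ((if (k : ℤ) = (n : ℤ) - 1 then -u k else 0) +
           (if (k : ℤ) = (n : ℤ) + 1 then -u k else 0))) := by
        exact Finset.sum_congr rfl (fun k _ => hpt k)
    _ = W n * u n - extZ u ((n : ℤ) - 1) - extZ u ((n : ℤ) + 1) := by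
        rw [Finset.sum_add_distrib, Finset.sum_add_distrib,
          sum_ite_coe, sum_ite_coe, sum_ite_coe]
        rw [dif_pos n.2]
        unfold extZ
        simp only [Subtype.coe_eta]
        split_ifs <;> ring

lemma schrInt_symm (W : ℤ → ℝ) (c d : ℤ) : (schrInt W c d).transpose = schrInt W c d := by
  ext i j
  unfold schrInt Matrix.transpose
  simp only [Matrix.of_apply]
  by_cases h : (i : ℤ) = (j : ℤ)
  · have : i = j := Subtype.ext h
    subst this
    rfl
  · rw [if_neg h, if_neg (fun hh => h hh.symm), if_congr or_comm rfl rfl]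

/-- if for every `m ∈ [a,b]` there is a subinterval `Λ_m = [a_m,b_m] ⊆ [a,b]`
containing `m` with `E` not an eigenvalue of `H_{Λ_m}` and
`(1 - [a_m = a])·|G_{Λ_m}(a_m,m)| + (1 - [b_m = b])·|G_{Λ_m}(b_m,m)| < 1`,
then `E` is not an eigenvalue of `H_{[a,b]}`. -/
theorem not_eigenvalue_of_green_decay
    (V : ℤ → ℝ) (E : ℝ) (a b : ℤ)
    (h : ∀ m ∈ Finset.Icc a b, ∃ am bm : ℤ, ∃ h1 : am ≤ m, ∃ h2 : m ≤ bm,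
      a ≤ am ∧ bm ≤ b ∧
      (¬ ∃ v : (Finset.Icc am bm) → ℝ, v ≠ 0 ∧ (schrInt V am bm).mulVec v = E • v) ∧
      (if am = a then 0 else
        |(schrInt V am bm - E • 1)⁻¹
          ⟨am, Finset.mem_Icc.mpr ⟨le_refl am, h1.trans h2⟩⟩
          ⟨m, Finset.mem_Icc.mpr ⟨h1, h2⟩⟩|) +
      (if bm = b then 0 else
        |(schrInt V am bm - E • 1)⁻¹
          ⟨bm, Finset.mem_Icc.mpr ⟨h1.trans h2, le_refl bm⟩⟩
          ⟨m, Finset.mem_Icc.mpr ⟨h1, h2⟩⟩|) < 1) :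
    ¬ ∃ v : (Finset.Icc a b) → ℝ, v ≠ 0 ∧ (schrInt V a b).mulVec v = E • v := by
  rintro ⟨ψ, hψ0, hψE⟩
  -- maximizer
  obtain ⟨i₀, hi₀⟩ : ∃ i, ψ i ≠ 0 := Function.ne_iff.mp hψ0
  have : Nonempty (Finset.Icc a b : Finset ℤ) := ⟨i₀⟩
  obtain ⟨m, hm⟩ := Finite.exists_max (fun i : Finset.Icc a b => |ψ i|)
  set M := |ψ m| with hMdef
  have hM0 : 0 < M := lt_of_lt_of_le (abs_pos.mpr hi₀) (hm i₀)
  have hMb : ∀ t : ℤ, |extZ ψ t| ≤ M := by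
    intro t
    unfold extZ
    split_ifs with h
    · exact hm _
    · simpa using le_of_lt hM0
  obtain ⟨am, bm, h1, h2, ham, hbm, hinv, hlt⟩ := h (m : ℤ) m.2
  set A : Matrix (Finset.Icc am bm) (Finset.Icc am bm) ℝ := schrInt V am bm - E • 1 with hAdef
  -- invertibility
  have hdet : IsUnit A.det := by
    rw [isUnit_iff_ne_zero]
    intro hd
    obtain ⟨v, hv, hAv⟩ := (Matrix.exists_mulVec_eq_zero_iff).mpr hd
    apply hinv
    refine ⟨v, hv, ?_⟩
    have := hAv
    rw [hAdef, Matrix.sub_mulVec, Matrix.smul_mulVec, Matrix.one_mulVec,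
      sub_eq_zero] at this
    exact this
  have hmem : (m : ℤ) ∈ Finset.Icc am bm := Finset.mem_Icc.mpr ⟨h1, h2⟩
  have hsub : ∀ n : ℤ, n ∈ Finset.Icc am bm → n ∈ Finset.Icc a b := by
    intro n hn
    rw [Finset.mem_Icc] at *
    omega
  set φ : Finset.Icc am bm → ℝ := fun k => ψ ⟨k, hsub k k.2⟩ with hφdef
  -- eigen equation in extZ form
  have heig : ∀ n : Finset.Icc a b,
      V n * ψ n - extZ ψ ((n : ℤ) - 1) - extZ ψ ((n : ℤ) + 1) = E * ψ n := by
    intro n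
    rw [← schrInt_mulVec V ψ n, hψE]
    rfl
  -- extZ of restriction
  have hres : ∀ t : ℤ, extZ φ t = if t ∈ Finset.Icc am bm then extZ ψ t else 0 := by
    intro t
    unfold extZ
    split_ifs with h1' h2'
    · rfl
    · exact absurd (hsub t h1') h2'
    · rfl
  -- Poisson formula: A.mulVec φ = boundary terms
  have key : A.mulVec φ = fun n : Finset.Icc am bm =>
      (if (n : ℤ) = am ∧ am ≠ a then extZ ψ (am - 1) else 0) +
      (if (n : ℤ) = bm ∧ bm ≠ b then extZ ψ (bm + 1) else 0) := by
    funext n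
    have hn := Finset.mem_Icc.mp n.2
    rw [hAdef, Matrix.sub_mulVec, Matrix.smul_mulVec, Matrix.one_mulVec]
    simp only [Pi.sub_apply, Pi.smul_apply, smul_eq_mul]
    rw [schrInt_mulVec]
    have hφn : φ n = ψ ⟨(n : ℤ), hsub n n.2⟩ := rfl
    have he := heig ⟨(n : ℤ), hsub n n.2⟩
    simp only at he
    rw [hφn, hres, hres]
    rw [Finset.mem_Icc] at *
    have e1 : (if ((n : ℤ) - 1 : ℤ) ∈ Finset.Icc am bm then extZ ψ ((n:ℤ) - 1) else 0) =
        extZ ψ ((n:ℤ) - 1) - (if (n : ℤ) = am ∧ am ≠ a then extZ ψ (am - 1) else 0) := by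
      simp only [Finset.mem_Icc]
      by_cases hc : (n : ℤ) = am
      · rw [if_neg (by omega)]
        by_cases hc2 : am = a
        · rw [if_neg (by tauto)]
          have : extZ ψ ((n:ℤ) - 1) = 0 := by
            unfold extZ
            rw [dif_neg]
            rw [Finset.mem_Icc]
            omega
          rw [this]; ring
        · rw [if_pos ⟨hc, hc2⟩, hc]; ring
      · rw [if_pos (by omega), if_neg (by tauto)]; ring
    have e2 : (if ((n : ℤ) + 1 : ℤ) ∈ Finset.Icc am bm then extZ ψ ((n:ℤ) + 1) else 0) =
        extZ ψ ((n:ℤ) + 1) - (if (n : ℤ) = bm ∧ bm ≠ b then extZ ψ (bm + 1) else 0) := by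
      simp only [Finset.mem_Icc]
      by_cases hc : (n : ℤ) = bm
      · rw [if_neg (by omega)]
        by_cases hc2 : bm = b
        · rw [if_neg (by tauto)]
          have : extZ ψ ((n:ℤ) + 1) = 0 := by
            unfold extZ
            rw [dif_neg]
            rw [Finset.mem_Icc]
            omega
          rw [this]; ring
        · rw [if_pos ⟨hc, hc2⟩, hc]; ring
      · rw [if_pos (by omega), if_neg (by tauto)]; ring
    rw [e1, e2]
    linarith [he]
  -- solve back via the inverse
  have hφeq : φ = A⁻¹.mulVec (A.mulVec φ) := by
    rw [Matrix.mulVec_mulVec, Matrix.nonsing_inv_mul A hdet, Matrix.one_mulVec]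
  have hammem : am ∈ Finset.Icc am bm := Finset.mem_Icc.mpr ⟨le_refl am, h1.trans h2⟩
  have hbmmem : bm ∈ Finset.Icc am bm := Finset.mem_Icc.mpr ⟨h1.trans h2, le_refl bm⟩
  set m' : Finset.Icc am bm := ⟨(m : ℤ), hmem⟩ with hm'def
  have hφm : φ m' = ψ m := congrArg ψ (Subtype.ext rfl)
  have hval : ψ m = ∑ k : Finset.Icc am bm, A⁻¹ m' k *
      ((if (k : ℤ) = am ∧ am ≠ a then extZ ψ (am - 1) else 0) +
       (if (k : ℤ) = bm ∧ bm ≠ b then extZ ψ (bm + 1) else 0)) := by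
    conv_lhs => rw [← hφm, hφeq]
    rw [key]
    rfl
  have hsum : ψ m =
      (if am = a then 0 else A⁻¹ m' ⟨am, hammem⟩ * extZ ψ (am - 1)) +
      (if bm = b then 0 else A⁻¹ m' ⟨bm, hbmmem⟩ * extZ ψ (bm + 1)) := by
    rw [hval]
    have hpt : ∀ k : Finset.Icc am bm, A⁻¹ m' k *
        ((if (k : ℤ) = am ∧ am ≠ a then extZ ψ (am - 1) else 0) +
         (if (k : ℤ) = bm ∧ bm ≠ b then extZ ψ (bm + 1) else 0)) =
        (if (k : ℤ) = am then (if am = a then 0 else A⁻¹ m' k * extZ ψ (am - 1)) else 0) +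
        (if (k : ℤ) = bm then (if bm = b then 0 else A⁻¹ m' k * extZ ψ (bm + 1)) else 0) := by
      intro k
      by_cases hka : (k : ℤ) = am <;> by_cases hkb : (k : ℤ) = bm <;>
        by_cases haa : am = a <;> by_cases hbb : bm = b <;>
        simp only [hka, hkb, haa, hbb, ne_eq, not_true_eq_false, not_false_eq_true,
          and_true, and_false, if_true, if_false, true_and, false_and] <;>
        first | ring1 | (split_ifs <;> ring1)
    rw [Finset.sum_congr rfl (fun k _ => hpt k), Finset.sum_add_distrib,
      sum_ite_coe, sum_ite_coe, dif_pos hammem, dif_pos hbmmem]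
  -- symmetry of A⁻¹
  have hAs : A.transpose = A := by
    rw [hAdef, Matrix.transpose_sub, Matrix.transpose_smul, Matrix.transpose_one,
      schrInt_symm]
  have hAinv_symm : ∀ i j, A⁻¹ i j = A⁻¹ j i := by
    intro i j
    calc A⁻¹ i j = (A⁻¹).transpose j i := rfl
      _ = (A.transpose)⁻¹ j i := by rw [Matrix.transpose_nonsing_inv]
      _ = A⁻¹ j i := by rw [hAs]
  -- final bound
  have hb1 : |if am = a then 0 else A⁻¹ m' ⟨am, hammem⟩ * extZ ψ (am - 1)| ≤
      (if am = a then 0 else |A⁻¹ ⟨am, hammem⟩ m'|) * M := by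
    split_ifs with hc
    · simp
    · rw [abs_mul, hAinv_symm]
      exact mul_le_mul_of_nonneg_left (hMb _) (abs_nonneg _)
  have hb2 : |if bm = b then 0 else A⁻¹ m' ⟨bm, hbmmem⟩ * extZ ψ (bm + 1)| ≤
      (if bm = b then 0 else |A⁻¹ ⟨bm, hbmmem⟩ m'|) * M := by
    split_ifs with hc
    · simp
    · rw [abs_mul, hAinv_symm]
      exact mul_le_mul_of_nonneg_left (hMb _) (abs_nonneg _)
  have hMle : M ≤ ((if am = a then 0 else |A⁻¹ ⟨am, hammem⟩ m'|) +
      (if bm = b then 0 else |A⁻¹ ⟨bm, hbmmem⟩ m'|)) * M := by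
    rw [hMdef]
    calc |ψ m| = |(if am = a then 0 else A⁻¹ m' ⟨am, hammem⟩ * extZ ψ (am - 1)) +
        (if bm = b then 0 else A⁻¹ m' ⟨bm, hbmmem⟩ * extZ ψ (bm + 1))| := by rw [← hsum]
      _ ≤ _ + _ := abs_add_le _ _
      _ ≤ _ := add_le_add hb1 hb2
      _ = _ := (add_mul _ _ _).symm
  have hlt' : ((if am = a then 0 else |A⁻¹ ⟨am, hammem⟩ m'|) +
      (if bm = b then 0 else |A⁻¹ ⟨bm, hbmmem⟩ m'|)) < 1 := hlt
  have : M < M := by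
    calc M ≤ _ * M := hMle
      _ < 1 * M := mul_lt_mul_of_pos_right hlt' hM0
      _ = M := one_mul M
  exact lt_irrefl M this
end
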